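/- Let X be a real Banach space and let Y = Y₁ ⊕_a Y₂ be the absolute sum of real Banach spaces Y₁ and Y₂ with respect to an absolute norm N (so Y₁ is an absolute summand of Y). If the pair (X, Y₁ ⊕_a Y₂) has the pointwise BPB property, then the pair (X, Y₁) has the pointwise BPB property. -/

import Mathlib

open Filter Topology

/-- `N` is an absolute norm on `ℝ²`: a norm with `N(1,0)=N(0,1)=1` and
`N(s,t)=N(|s|,|t|)`. -/
structure IsAbsoluteNorm (N : ℝ → ℝ → ℝ) : Prop where
  nonneg : ∀ s t : ℝ, 0 ≤ N s t
  eq_zero_iff : ∀ s t : ℝ, N s t = 0 ↔ s = 0 ∧ t = 0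
  triangle : ∀ s₁ t₁ s₂ t₂ : ℝ, N (s₁ + s₂) (t₁ + t₂) ≤ N s₁ t₁ + N s₂ t₂
  smul : ∀ c s t : ℝ, N (c * s) (c * t) = |c| * N s t
  one_zero : N 1 0 = 1
  zero_one : N 0 1 = 1
  abs_eq : ∀ s t : ℝ, N s t = N |s| |t|

/-- The pair `(X, Y)` has the pointwise Bishop–Phelps–Bollobás property. -/
def HasPointwiseBPB (X Y : Type*) [NormedAddCommGroup X] [NormedSpace ℝ X]
    [NormedAddCommGroup Y] [NormedSpace ℝ Y] : Prop :=
  ∀ ε : ℝ, 0 < ε → ∃ η : ℝ, 0 < η ∧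
    ∀ (T : X →L[ℝ] Y) (x₀ : X), ‖T‖ = 1 → ‖x₀‖ = 1 → 1 - η < ‖T x₀‖ →
      ∃ S : X →L[ℝ] Y, ‖S‖ = 1 ∧ ‖S x₀‖ = 1 ∧ ‖S - T‖ < ε

/-!
Embed `T : X →L[ℝ] Y₁` isometrically into `Y` as `ι ∘ T`, where `ι z = e⁻¹ (z, 0)`, and let `S'` be
the operator given by the property of `(X, Y)`. Write `e (S' x₀) = (u₁, u₂)`. Hahn–Banach on
`(ℝ², N)` gives `α, β ≥ 0` with `α ‖u₁‖ + β ‖u₂‖ = 1` and `α s + β t ≤ N s t` for `s, t ≥ 0`; with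
`f` a norming functional of `u₂`, the map `Φ (e⁻¹ (y₁, y₂)) = α y₁ + f y₂ • (β / ‖u₁‖) u₁` has norm
at most one and norms `S' x₀`. As `Φ ∘ ι = α • id` and `1 - α ≤ ‖u₂‖ ≤ ‖S' - ι ∘ T‖`, the operator
`Φ ∘ S'` is within `2 ‖S' - ι ∘ T‖` of `T`.
-/

namespace IsAbsoluteNorm

variable {N : ℝ → ℝ → ℝ}

lemma apply_zero_right (hN : IsAbsoluteNorm N) (s : ℝ) : N s 0 = |s| := by
  simpa [hN.one_zero] using hN.smul s 1 0

lemma apply_zero_left (hN : IsAbsoluteNorm N) (t : ℝ) : N 0 t = |t| := by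
  simpa [hN.zero_one] using hN.smul t 0 1

-- `(s, t) + (-s, t) = (0, 2t)`, and `N` does not see the sign of `s`.
lemma abs_le_right (hN : IsAbsoluteNorm N) (s t : ℝ) : |t| ≤ N s t := by
  have h := hN.triangle s t (-s) t
  rw [add_neg_cancel, ← two_mul, hN.apply_zero_left, abs_mul, abs_two,
    hN.abs_eq (-s), abs_neg, ← hN.abs_eq] at h
  linarith

lemma abs_le_left (hN : IsAbsoluteNorm N) (s t : ℝ) : |s| ≤ N s t := by
  have h := hN.triangle s t s (-t)
  rw [add_neg_cancel, ← two_mul, hN.apply_zero_right, abs_mul, abs_two,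
    hN.abs_eq s (-t), abs_neg, ← hN.abs_eq] at h
  linarith

lemma exists_linear_support (hN : IsAbsoluteNorm N) (a b : ℝ) :
    ∃ α β : ℝ, α * a + β * b = N a b ∧ ∀ s t : ℝ, α * s + β * t ≤ N s t := by
  by_cases hab : ((a, b) : ℝ × ℝ) = 0
  · obtain ⟨rfl, rfl⟩ := Prod.mk_eq_zero.1 hab
    exact ⟨0, 0, by simpa using (hN.apply_zero_right 0).symm, by simpa using hN.nonneg⟩
  obtain ⟨g, hg_ext, hg_le⟩ := exists_extension_of_le_sublinear
    (LinearPMap.mkSpanSingleton (K := ℝ) (σ := RingHom.id ℝ) (a, b) (N a b) hab)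
    (fun p => N p.1 p.2)
    (fun c hc p => by simpa [abs_of_pos hc] using hN.smul c p.1 p.2)
    (fun p q => hN.triangle _ _ _ _)
    (fun ⟨p, hp⟩ => by
      obtain ⟨c, rfl⟩ := Submodule.mem_span_singleton.1 hp
      rw [LinearPMap.mkSpanSingleton'_apply]
      simpa [hN.smul] using mul_le_mul_of_nonneg_right (le_abs_self c) (hN.nonneg a b))
  have hg : ∀ s t : ℝ, g (s, t) = g (1, 0) * s + g (0, 1) * t := by
    intro s t
    rw [show ((s, t) : ℝ × ℝ) = s • (1, 0) + t • (0, 1) by simp, map_add, map_smul, map_smul,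
      smul_eq_mul, smul_eq_mul, mul_comm s, mul_comm t]
  refine ⟨g (1, 0), g (0, 1), ?_, fun s t => hg s t ▸ hg_le (s, t)⟩
  rw [← hg, hg_ext ⟨(a, b), Submodule.mem_span_singleton_self _⟩,
    LinearPMap.mkSpanSingleton_apply]

lemma exists_nonneg_linear_support (hN : IsAbsoluteNorm N) {a b : ℝ} (ha : 0 ≤ a) (hb : 0 ≤ b) :
    ∃ α β : ℝ, 0 ≤ α ∧ 0 ≤ β ∧ α * a + β * b = N a b ∧
      ∀ s t : ℝ, 0 ≤ s → 0 ≤ t → α * s + β * t ≤ N s t := by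
  obtain ⟨α, β, hab, hle⟩ := hN.exists_linear_support a b
  have hclip : ∀ c x : ℝ, max c 0 * x = c * if 0 ≤ c then x else 0 := by
    intro c x
    split_ifs with hc
    · rw [max_eq_left hc]
    · rw [max_eq_right (not_le.1 hc).le, zero_mul, mul_zero]
  have hsupp : ∀ s t : ℝ, 0 ≤ s → 0 ≤ t → max α 0 * s + max β 0 * t ≤ N s t := by
    intro s t hs ht
    rw [hclip, hclip]
    refine (hle _ _).trans ?_
    split_ifs
    · exact le_rfl
    · simpa [hN.apply_zero_right, abs_of_nonneg hs] using hN.abs_le_left s t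
    · simpa [hN.apply_zero_left, abs_of_nonneg ht] using hN.abs_le_right s t
    · simpa [hN.apply_zero_left] using hN.nonneg s t
  refine ⟨max α 0, max β 0, le_max_right _ _, le_max_right _ _, ?_, hsupp⟩
  refine le_antisymm (hsupp a b ha hb) ?_
  rw [← hab]
  gcongr <;> exact le_max_left _ _

end IsAbsoluteNorm

section AbsoluteSum

variable {Y Y₁ Y₂ : Type*} [NormedAddCommGroup Y] [NormedSpace ℝ Y]
  [NormedAddCommGroup Y₁] [NormedSpace ℝ Y₁] [NormedAddCommGroup Y₂] [NormedSpace ℝ Y₂]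
  {N : ℝ → ℝ → ℝ}

noncomputable def absSumInl (hN : IsAbsoluteNorm N) (e : Y ≃L[ℝ] Y₁ × Y₂)
    (he : ∀ y : Y, ‖y‖ = N ‖(e y).1‖ ‖(e y).2‖) : Y₁ →ₗᵢ[ℝ] Y where
  toLinearMap := ((e.symm : Y₁ × Y₂ →L[ℝ] Y).comp (ContinuousLinearMap.inl ℝ Y₁ Y₂)).toLinearMap
  norm_map' z := by simp [he, hN.apply_zero_right]

@[simp]
lemma apply_absSumInl (hN : IsAbsoluteNorm N) (e : Y ≃L[ℝ] Y₁ × Y₂)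
    (he : ∀ y : Y, ‖y‖ = N ‖(e y).1‖ ‖(e y).2‖) (z : Y₁) : e (absSumInl hN e he z) = (z, 0) := by
  simp [absSumInl]

lemma norm_snd_apply_le (hN : IsAbsoluteNorm N) (e : Y ≃L[ℝ] Y₁ × Y₂)
    (he : ∀ y : Y, ‖y‖ = N ‖(e y).1‖ ‖(e y).2‖) (y : Y) : ‖(e y).2‖ ≤ ‖y‖ := by
  simpa [he y] using hN.abs_le_right ‖(e y).1‖ ‖(e y).2‖

lemma norm_coprod_comp_le_one (e : Y ≃L[ℝ] Y₁ × Y₂)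
    (he : ∀ y : Y, ‖y‖ = N ‖(e y).1‖ ‖(e y).2‖) {α β : ℝ} (hα : 0 ≤ α)
    (hle : ∀ s t : ℝ, 0 ≤ s → 0 ≤ t → α * s + β * t ≤ N s t)
    {f : StrongDual ℝ Y₂} (hf : ‖f‖ ≤ 1) {v : Y₁} (hv : ‖v‖ ≤ β) :
    ‖((α • ContinuousLinearMap.id ℝ Y₁).coprod (f.smulRight v)).comp (e : Y →L[ℝ] Y₁ × Y₂)‖
      ≤ 1 := by
  refine ContinuousLinearMap.opNorm_le_bound _ zero_le_one fun y => ?_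
  have hfy : ‖f (e y).2‖ ≤ ‖(e y).2‖ := by simpa using f.le_of_opNorm_le hf (e y).2
  calc _ = ‖α • (e y).1 + f (e y).2 • v‖ := by simp
    _ ≤ α * ‖(e y).1‖ + ‖f (e y).2‖ * ‖v‖ := by
        simpa [norm_smul, abs_of_nonneg hα] using norm_add_le (α • (e y).1) (f (e y).2 • v)
    _ ≤ α * ‖(e y).1‖ + ‖(e y).2‖ * β := by gcongr
    _ ≤ 1 * ‖y‖ := by
        rw [one_mul, he y, mul_comm _ β]
        exact hle _ _ (norm_nonneg _) (norm_nonneg _)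

lemma exists_almost_retraction_norming (hN : IsAbsoluteNorm N) (e : Y ≃L[ℝ] Y₁ × Y₂)
    (he : ∀ y : Y, ‖y‖ = N ‖(e y).1‖ ‖(e y).2‖) {y₀ : Y} (hy₀ : ‖y₀‖ = 1)
    (hb : ‖(e y₀).2‖ < 1) :
    ∃ Φ : Y →L[ℝ] Y₁, ‖Φ‖ ≤ 1 ∧ ‖Φ y₀‖ = 1 ∧
      ‖Φ.comp (absSumInl hN e he).toContinuousLinearMap - ContinuousLinearMap.id ℝ Y₁‖
        ≤ ‖(e y₀).2‖ := by
  set u := e y₀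
  obtain ⟨α, β, hα, hβ, hαβ, hle⟩ :=
    hN.exists_nonneg_linear_support (norm_nonneg u.1) (norm_nonneg u.2)
  rw [← he, hy₀] at hαβ
  have hα1 : α ≤ 1 := by simpa [hN.one_zero] using hle 1 0 zero_le_one le_rfl
  have hβ1 : β ≤ 1 := by simpa [hN.zero_one] using hle 0 1 le_rfl zero_le_one
  have hu₁ : ‖u.1‖ ≤ 1 := by
    have := hN.abs_le_left ‖u.1‖ ‖u.2‖
    rwa [abs_norm, ← he, hy₀] at this
  have hu₂ := norm_nonneg u.2
  have hu₁_pos : 0 < ‖u.1‖ := by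
    by_contra! h
    nlinarith [norm_nonneg u.1]
  set v := (β / ‖u.1‖) • u.1
  have hv : ‖v‖ = β := by
    rw [norm_smul, Real.norm_of_nonneg (by positivity), div_mul_cancel₀ _ hu₁_pos.ne']
  obtain ⟨f, hf, hfu⟩ := exists_dual_vector'' ℝ u.2
  set Φ := ((α • ContinuousLinearMap.id ℝ Y₁).coprod (f.smulRight v)).comp
    (e : Y →L[ℝ] Y₁ × Y₂)
  refine ⟨Φ, norm_coprod_comp_le_one e he hα hle hf hv.le, ?_, ?_⟩
  · have hΦy₀ : Φ y₀ = (α + ‖u.2‖ * (β / ‖u.1‖)) • u.1 := by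
      simp [Φ, u, hfu, v, smul_smul, add_smul]
    have : α + ‖u.2‖ * (β / ‖u.1‖) = ‖u.1‖⁻¹ := by
      field_simp
      linarith
    rw [hΦy₀, this, norm_smul, norm_inv, norm_norm, inv_mul_cancel₀ hu₁_pos.ne']
  · have hΦι : Φ.comp (absSumInl hN e he).toContinuousLinearMap - ContinuousLinearMap.id ℝ Y₁
        = (α - 1) • ContinuousLinearMap.id ℝ Y₁ := by
      ext z
      simp [Φ, sub_smul]
    calc _ = |α - 1| * ‖ContinuousLinearMap.id ℝ Y₁‖ := by rw [hΦι, norm_smul, Real.norm_eq_abs]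
      _ ≤ |α - 1| * 1 := by gcongr; exact ContinuousLinearMap.norm_id_le
      _ ≤ ‖u.2‖ := by
          rw [mul_one, abs_sub_le_iff]
          constructor <;> nlinarith

end AbsoluteSum

theorem pointwise_bpb_absolute_summand_range_general (X Y Y₁ Y₂ : Type*)
    [NormedAddCommGroup X] [NormedSpace ℝ X]
    [NormedAddCommGroup Y] [NormedSpace ℝ Y]
    [NormedAddCommGroup Y₁] [NormedSpace ℝ Y₁]
    [NormedAddCommGroup Y₂] [NormedSpace ℝ Y₂]
    (N : ℝ → ℝ → ℝ) (hN : IsAbsoluteNorm N)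
    (e : Y ≃L[ℝ] Y₁ × Y₂) (he : ∀ y : Y, ‖y‖ = N ‖(e y).1‖ ‖(e y).2‖)
    (h : HasPointwiseBPB X Y) : HasPointwiseBPB X Y₁ := by
  intro ε hε
  obtain ⟨η, hη, hBPB⟩ := h (min (ε / 2) (1 / 2)) (by positivity)
  refine ⟨η, hη, fun T x₀ hT hx₀ hTx₀ => ?_⟩
  set ι := (absSumInl hN e he).toContinuousLinearMap
  obtain ⟨S', hS', hS'x₀, hS'T⟩ := hBPB (ι.comp T) x₀
    (by rw [LinearIsometry.norm_toContinuousLinearMap_comp, hT]) hx₀ (by simpa [ι] using hTx₀)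
  have hb : ‖(e (S' x₀)).2‖ ≤ ‖S' - ι.comp T‖ :=
    calc ‖(e (S' x₀)).2‖ = ‖(e ((S' - ι.comp T) x₀)).2‖ := by simp [ι]
      _ ≤ ‖(S' - ι.comp T) x₀‖ := norm_snd_apply_le hN e he _
      _ ≤ ‖S' - ι.comp T‖ := by simpa [hx₀] using (S' - ι.comp T).le_opNorm x₀
  obtain ⟨Φ, hΦ, hΦx₀, hΦι⟩ := exists_almost_retraction_norming hN e he hS'x₀
    (by linarith [min_le_right (ε / 2) (1 / 2)])
  refine ⟨Φ.comp S', le_antisymm ?_ ?_, hΦx₀, ?_⟩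
  · simpa [hS'] using
      Φ.opNorm_comp_le S' |>.trans (mul_le_mul_of_nonneg_right hΦ (norm_nonneg S'))
  · simpa [hx₀, hΦx₀] using (Φ.comp S').le_opNorm x₀
  calc ‖Φ.comp S' - T‖
      = ‖Φ.comp (S' - ι.comp T) + (Φ.comp ι - ContinuousLinearMap.id ℝ Y₁).comp T‖ := by
        rw [ContinuousLinearMap.comp_sub, ContinuousLinearMap.sub_comp,
          ContinuousLinearMap.comp_assoc, ContinuousLinearMap.id_comp, sub_add_sub_cancel]
    _ ≤ ‖Φ‖ * ‖S' - ι.comp T‖ + ‖Φ.comp ι - ContinuousLinearMap.id ℝ Y₁‖ * ‖T‖ :=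
        norm_add_le_of_le (Φ.opNorm_comp_le _) (ContinuousLinearMap.opNorm_comp_le _ _)
    _ ≤ 1 * ‖S' - ι.comp T‖ + ‖(e (S' x₀)).2‖ * 1 := by
        rw [hT]; gcongr
    _ < ε := by linarith [min_le_left (ε / 2) (1 / 2)]

theorem pointwise_bpb_absolute_summand_range (X Y Y₁ Y₂ : Type*)
    [NormedAddCommGroup X] [NormedSpace ℝ X] [CompleteSpace X]
    [NormedAddCommGroup Y] [NormedSpace ℝ Y] [CompleteSpace Y]
    [NormedAddCommGroup Y₁] [NormedSpace ℝ Y₁] [CompleteSpace Y₁]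
    [NormedAddCommGroup Y₂] [NormedSpace ℝ Y₂] [CompleteSpace Y₂]
    (N : ℝ → ℝ → ℝ) (hN : IsAbsoluteNorm N)
    (e : Y ≃L[ℝ] Y₁ × Y₂) (he : ∀ y : Y, ‖y‖ = N ‖(e y).1‖ ‖(e y).2‖)
    (h : HasPointwiseBPB X Y) : HasPointwiseBPB X Y₁ :=
  pointwise_bpb_absolute_summand_range_general X Y Y₁ Y₂ N hN e he h
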